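/- Let g be a finite-dimensional real nilpotent Lie algebra with a nice basis B, let s = dim z(g) be the dimension of the center of g, and let r = dim g − s. If r ≤ s + 3, then there exists an arrow-breaking involution σ of B. -/

import Mathlib

/-!
Call a basis vector a *source* if it is not central. By niceness the centre is spanned by the
non-sources, so `r ≤ s + 3` says that there are at most three more sources than non-sources.
An involution sending every source to a non-source breaks all arrows, since a non-source labels
no arrow; this settles the case of at least as many non-sources as sources.

Otherwise `t ∈ {1, 2, 3}` sources must be mapped to sources. Let `v` be a source of maximal depth
in the lower central series: arrows labelled by `v` end in non-sources. Mapping `j ↦ k` for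
`e v →^{e j} e k` injects the sources not commuting with `v` into the non-sources, so at least
`t - 1` sources other than `v` commute with `v`. If `y` commutes with `v`, the Jacobi identity
shows that an arrow labelled by `y` ends in a non-source, in `v`, or in a deeper source commuting
with `v`. So for the deepest such `y` and the next deepest `x`, the involution fixing `v`
(`t = 1`), swapping `v` and `y` (`t = 2`), or swapping `v` and `x` and fixing `y` (`t = 3`), and
exchanging the remaining sources with the non-sources, is arrow-breaking.
-/

open scoped BigOperators

namespace ArrowBreakingPaper

variable {ι : Type*} {g : Type*} [LieRing g] [LieAlgebra ℝ g]

/-- `⁅e i, e j⁆` is a nonzero multiple of `e k` (the arrow `e i →^{e j} e k`). -/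
def Arrow (e : ι → g) (i j k : ι) : Prop :=
  ∃ c : ℝ, c ≠ 0 ∧ ⁅e i, e j⁆ = c • e k

/-- A basis is *nice* if each bracket of two basis vectors is a multiple of a single basis
vector, and for all `i`, `k` there is at most one `j` such that the `e k`-coefficient of
`⁅e i, e j⁆` is nonzero. -/
def IsNiceBasis (e : Module.Basis ι ℝ g) : Prop :=
  (∀ i j : ι, ∃ (k : ι) (c : ℝ), ⁅e i, e j⁆ = c • e k) ∧
  (∀ i k j j' : ι, e.repr ⁅e i, e j⁆ k ≠ 0 → e.repr ⁅e i, e j'⁆ k ≠ 0 → j = j')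

/-- An *arrow-breaking involution* of the (nice) basis `e`. -/
def IsArrowBreaking (e : ι → g) (σ : Equiv.Perm ι) : Prop :=
  (∀ i, σ (σ i) = i) ∧
  (∀ i j k, Arrow e i j k → ∀ l, ¬ Arrow e l (σ j) (σ k)) ∧
  (∀ i j k, Arrow e i j k → ∀ m, ¬ Arrow e (σ i) (σ j) m)

/-- A `σ`-diagonal metric: `⟨e i, e (σ j)⟩ = gᵢ δᵢⱼ` with all `gᵢ ≠ 0` and `g_{σ i} = gᵢ`. -/
def IsSigmaDiagonal [DecidableEq ι] (e : Module.Basis ι ℝ g) (σ : Equiv.Perm ι)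
    (B : LinearMap.BilinForm ℝ g) : Prop :=
  ∃ gv : ι → ℝ, (∀ i, gv i ≠ 0) ∧ (∀ i, gv (σ i) = gv i) ∧
    ∀ i j, B (e i) (e (σ j)) = if i = j then gv i else 0

/-- Symmetry of a bilinear form. -/
def IsSymm (B : LinearMap.BilinForm ℝ g) : Prop := ∀ x y : g, B x y = B y x

/-- Nondegeneracy of a bilinear form. -/
def Nondeg (B : LinearMap.BilinForm ℝ g) : Prop :=
  ∀ v : g, (∀ w : g, B v w = 0) → v = 0

/-- The Gram matrix of a bilinear form in a basis. -/
noncomputable def gram [Fintype ι] (e : Module.Basis ι ℝ g) (B : LinearMap.BilinForm ℝ g) :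
    Matrix ι ι ℝ := Matrix.of fun i j => B (e i) (e j)

/-- The Ricci curvature `ric(v,w) = ½⟨dv♭, dw♭⟩ − ½⟨ad v, ad w⟩` written in the
coordinates of a basis `e`, where `dα(x,y) = −α(⁅x,y⁆)` and the scalar products on
`Λ²g*` and `g*⊗g` are induced by the dual metric (inverse Gram matrix). -/
noncomputable def ricci [Fintype ι] [DecidableEq ι] (e : Module.Basis ι ℝ g)
    (B : LinearMap.BilinForm ℝ g) (v w : g) : ℝ :=
  (1/2) * ((1/2) * ∑ i, ∑ j, ∑ k, ∑ l,
      (gram e B)⁻¹ i k * (gram e B)⁻¹ j l * (-(B v ⁅e i, e j⁆)) * (-(B w ⁅e k, e l⁆)))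
  - (1/2) * ∑ i, ∑ j, (gram e B)⁻¹ i j * B ⁅v, e i⁆ ⁅w, e j⁆

/-- Ricci-flatness of a metric on a Lie algebra. -/
def IsRicciFlat (B : LinearMap.BilinForm ℝ g) : Prop :=
  ∀ (m : ℕ) (e : Module.Basis (Fin m) ℝ g) (v w : g), ricci e B v w = 0

/-- The Koszul formula characterizing the Levi-Civita connection. -/
def IsLeviCivita (B : LinearMap.BilinForm ℝ g) (nab : g → g → g) : Prop :=
  ∀ u v w : g, 2 * B (nab u v) w = B ⁅u, v⁆ w - B ⁅v, w⁆ u + B ⁅w, u⁆ v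

/-- The curvature `R(u,v)w = ∇_{⁅u,v⁆} w − ∇_u ∇_v w + ∇_v ∇_u w`. -/
def curv (nab : g → g → g) (u v w : g) : g :=
  nab ⁅u, v⁆ w - nab u (nab v w) + nab v (nab u w)

/-- Flatness of a metric on a Lie algebra. -/
def IsFlat (B : LinearMap.BilinForm ℝ g) : Prop :=
  ∃ nab : g → g → g, IsLeviCivita B nab ∧ ∀ u v w : g, curv nab u v w = 0


end ArrowBreakingPaper

namespace ArrowBreakingPaper

open Finset

variable {ι g : Type*} [LieRing g]

/-- For a basis `e`, the sources are the basis vectors outside the centre; for a nice basis they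
are exactly the sources of arrows. -/
def IsSource (e : ι → g) (i : ι) : Prop := ∃ j, ⁅e i, e j⁆ ≠ 0

noncomputable def sources [Fintype ι] (e : ι → g) : Finset ι := by
  classical exact {i | IsSource e i}

@[simp]
lemma mem_sources [Fintype ι] {e : ι → g} {i : ι} : i ∈ sources e ↔ IsSource e i := by
  simp [sources]

lemma lie_eq_zero_of_not_isSource {e : ι → g} {i : ι} (h : ¬ IsSource e i) (j : ι) :
    ⁅e i, e j⁆ = 0 := by
  by_contra hne
  exact h ⟨j, hne⟩

variable [LieAlgebra ℝ g]

namespace Arrow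

variable {e : Module.Basis ι ℝ g} {i j k : ι}

lemma symm (h : Arrow e i j k) : Arrow e j i k := by
  obtain ⟨c, hc, hb⟩ := h
  exact ⟨-c, neg_ne_zero.2 hc, by rw [← lie_skew, hb, neg_smul]⟩

lemma lie_ne_zero (h : Arrow e i j k) : ⁅e i, e j⁆ ≠ 0 := by
  obtain ⟨c, hc, hb⟩ := h
  rw [hb]
  exact smul_ne_zero hc (e.ne_zero k)

lemma isSource_left (h : Arrow e i j k) : IsSource e i := ⟨j, h.lie_ne_zero⟩

lemma isSource_label (h : Arrow e i j k) : IsSource e j := h.symm.isSource_left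

lemma repr_ne_zero (h : Arrow e i j k) : e.repr ⁅e i, e j⁆ k ≠ 0 := by
  obtain ⟨c, hc, hb⟩ := h
  simpa [hb] using hc

lemma label_unique (hnice : IsNiceBasis e) {j' : ι} (h : Arrow e i j k) (h' : Arrow e i j' k) :
    j = j' :=
  hnice.2 i k j j' h.repr_ne_zero h'.repr_ne_zero

end Arrow

lemma IsNiceBasis.exists_arrow {e : Module.Basis ι ℝ g} (hnice : IsNiceBasis e) {i j : ι}
    (h : ⁅e i, e j⁆ ≠ 0) : ∃ k, Arrow e i j k := by
  obtain ⟨k, c, hb⟩ := hnice.1 i j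
  exact ⟨k, c, by rintro rfl; simp [hb] at h, hb⟩

section Center

variable [Fintype ι] {e : Module.Basis ι ℝ g}

lemma repr_lie_basis (x z : g) (k : ι) :
    e.repr ⁅x, z⁆ k = ∑ l, e.repr z l * e.repr ⁅x, e l⁆ k := by
  nth_rw 1 [← e.sum_repr z]
  simp only [lie_sum, lie_smul, map_sum, map_smul, Finsupp.finsetSum_apply, Finsupp.smul_apply,
    smul_eq_mul]

/-- Niceness isolates the `e i`-coordinate of `z` in the `e k`-coordinate of `⁅e j, z⁆`, where
`e i →^{e j} e k`. -/
lemma IsNiceBasis.repr_eq_zero_of_mem_center (hnice : IsNiceBasis e) {z : g}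
    (hz : z ∈ LieAlgebra.center ℝ g) {i : ι} (hi : IsSource e i) : e.repr z i = 0 := by
  obtain ⟨j, hij⟩ := hi
  obtain ⟨k, hk⟩ := hnice.exists_arrow hij
  have hjk := hk.symm.repr_ne_zero
  have hcoord : e.repr ⁅e j, z⁆ k = e.repr z i * e.repr ⁅e j, e i⁆ k := by
    rw [repr_lie_basis, Finset.sum_eq_single i]
    · intro l _ hli
      by_contra h
      exact hli (hnice.2 j k l i (right_ne_zero_of_mul h) hjk)
    · simp
  have hzero : ⁅e j, z⁆ = 0 := (LieModule.mem_maxTrivSubmodule ℝ g g z).1 hz (e j)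
  rw [hzero, map_zero, Finsupp.zero_apply, eq_comm, mul_eq_zero] at hcoord
  exact hcoord.resolve_right hjk

lemma IsNiceBasis.finrank_center_le [DecidableEq ι] (hnice : IsNiceBasis e) :
    Module.finrank ℝ (LieAlgebra.center ℝ g) ≤ #(sources e)ᶜ := by
  have hle :
      (LieAlgebra.center ℝ g).toSubmodule ≤ Submodule.span ℝ (e '' ↑(sources e)ᶜ) := by
    intro z hz
    rw [Module.Basis.mem_span_image]
    intro i hi
    by_contra hsrc
    simp only [Finset.coe_compl, Set.mem_compl_iff, Finset.mem_coe, mem_sources, not_not] at hsrc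
    exact (Finsupp.mem_support_iff.1 hi) (hnice.repr_eq_zero_of_mem_center hz hsrc)
  rw [Set.image_eq_range] at hle
  have := Module.Finite.of_basis e
  calc Module.finrank ℝ (LieAlgebra.center ℝ g)
      ≤ Module.finrank ℝ (Submodule.span ℝ (Set.range fun i : ↥(sources e)ᶜ => e i)) :=
        Submodule.finrank_mono hle
    _ ≤ Fintype.card ↥(sources e)ᶜ := finrank_range_le_card _
    _ = #(sources e)ᶜ := Fintype.card_coe _

end Center

lemma exists_involutive_exchange {α : Type*} [DecidableEq α] {A B : Finset α}
    (hAB : Disjoint A B) (hcard : #A = #B) {τ : Equiv.Perm α} (hτ : Function.Involutive τ)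
    (hτAB : ∀ x ∈ A ∪ B, τ x = x) :
    ∃ σ : Equiv.Perm α, Function.Involutive σ ∧ Set.MapsTo σ A B ∧ Set.MapsTo σ B A ∧
      ∀ x ∉ A ∪ B, σ x = τ x := by
  let β : A ≃ B := A.equivOfCardEq hcard
  let F : α → α := fun x =>
    if hA : x ∈ A then β ⟨x, hA⟩ else if hB : x ∈ B then β.symm ⟨x, hB⟩ else τ x
  have hFA : ∀ x (hA : x ∈ A), F x = β ⟨x, hA⟩ := fun x hA => dif_pos hA
  have hFB : ∀ x (hB : x ∈ B), F x = β.symm ⟨x, hB⟩ := fun x hB =>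
    (dif_neg (Finset.disjoint_right.1 hAB hB)).trans (dif_pos hB)
  have hFτ : ∀ x ∉ A ∪ B, F x = τ x := fun x hx => by
    rw [Finset.mem_union, not_or] at hx
    exact (dif_neg hx.1).trans (dif_neg hx.2)
  have hF : Function.Involutive F := by
    intro x
    by_cases hA : x ∈ A
    · rw [hFA x hA, hFB _ (β ⟨x, hA⟩).2]
      simp
    by_cases hB : x ∈ B
    · rw [hFB x hB, hFA _ (β.symm ⟨x, hB⟩).2]
      simp
    have hx : x ∉ A ∪ B := by simp [hA, hB]
    have hτx : τ x ∉ A ∪ B := fun h => hx (by rwa [← hτ x, hτAB _ h])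
    rw [hFτ x hx, hFτ _ hτx, hτ x]
  refine ⟨hF.toPerm F, hF, fun x hx => ?_, fun x hx => ?_, hFτ⟩
  · simpa only [hF.coe_toPerm, hFA x hx, Finset.mem_coe] using (β ⟨x, hx⟩).2
  · simpa only [hF.coe_toPerm, hFB x hx, Finset.mem_coe] using (β.symm ⟨x, hx⟩).2

section Breaking

variable [Fintype ι] [DecidableEq ι] {e : Module.Basis ι ℝ g}

/-- The involution exchanges the sources outside `T` with the non-sources in `B` and acts on `T`
by `τ`; every label outside `T` is then sent to a non-source, which labels no arrow. -/
lemma exists_isArrowBreaking_of_block {T B : Finset ι} (hT : T ⊆ sources e)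
    (hB : Disjoint B (sources e)) (hcard : #(sources e \ T) = #B) {τ : Equiv.Perm ι}
    (hτ : Function.Involutive τ) (hτT : ∀ x ∉ T, τ x = x)
    (hclosed : ∀ j ∈ T, ∀ a z, Arrow e a j z → z ∈ T ∨ z ∈ B)
    (hheads : ∀ j ∈ T, ∀ k ∈ T, ∀ a l, Arrow e a j k → ¬ Arrow e l (τ j) (τ k))
    (hcomm : ∀ i ∈ T, ∀ j ∈ T, ⁅e i, e j⁆ ≠ 0 → ⁅e (τ i), e (τ j)⁆ = 0) :
    ∃ σ : Equiv.Perm ι, IsArrowBreaking e σ := by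
  have hAB : Disjoint (sources e \ T) B := disjoint_of_subset_left sdiff_subset hB.symm
  have hnotT : ∀ x ∈ (sources e \ T) ∪ B, x ∉ T := by
    intro x hx hxT
    rcases mem_union.1 hx with hx | hx
    · exact (mem_sdiff.1 hx).2 hxT
    · exact disjoint_left.1 hB hx (hT hxT)
  obtain ⟨σ, hσ, hσA, hσB, hστ⟩ :=
    exists_involutive_exchange hAB hcard hτ fun x hx => hτT x (hnotT x hx)
  have hσT : ∀ j ∈ T, σ j = τ j := fun j hj => hστ j fun hx => hnotT j hx hj
  have hτmem : ∀ j ∈ T, τ j ∈ T := fun j hj => by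
    by_contra h
    exact h (by rwa [← hτT _ h, hτ j])
  have hsplit : ∀ j, IsSource e j → j ∈ T ∨ ¬ IsSource e (σ j) := by
    intro j hj
    by_cases hjT : j ∈ T
    · exact Or.inl hjT
    · exact Or.inr fun h => disjoint_left.1 hB (hσA (by simp [hj, hjT])) (mem_sources.2 h)
  refine ⟨σ, hσ, fun i j k h l h' => ?_, fun i j k h m h' => ?_⟩
  · obtain hj | hj := hsplit j h.isSource_label
    · rw [hσT j hj] at h'
      obtain hk | hk := hclosed j hj i k h
      · rw [hσT k hk] at h'
        exact hheads j hj k hk i l h h'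
      · have hσk := mem_sdiff.1 (hσB hk)
        obtain h1 | h1 := hclosed (τ j) (hτmem j hj) l (σ k) h'
        · exact hσk.2 h1
        · exact disjoint_left.1 hB h1 hσk.1
    · exact hj h'.isSource_label
  · obtain hi | hi := hsplit i h.isSource_left
    · obtain hj | hj := hsplit j h.isSource_label
      · rw [hσT i hi, hσT j hj] at h'
        exact h'.lie_ne_zero (hcomm i hi j hj h.lie_ne_zero)
      · exact hj h'.isSource_label
    · exact hi h'.isSource_left

lemma exists_isArrowBreaking_of_card_sources_le (h : #(sources e) ≤ #(sources e)ᶜ) :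
    ∃ σ : Equiv.Perm ι, IsArrowBreaking e σ := by
  obtain ⟨B, hBsub, hBcard⟩ := exists_subset_card_eq h
  refine exists_isArrowBreaking_of_block (T := ∅) (τ := 1) (empty_subset _)
    (disjoint_of_subset_left hBsub disjoint_compl_left) (by simpa using hBcard.symm)
    (fun _ => rfl) (fun _ _ => rfl) ?_ ?_ ?_ <;> simp

end Breaking

section Depth

open LieModule

variable (R L : Type*) {M : Type*} [CommRing R] [LieRing L] [LieAlgebra R L] [AddCommGroup M]
  [Module R M] [LieRingModule L M] [LieModule R L M]

/-- The index of the last term of the lower central series containing `m`; for `m = 0` the set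
is unbounded and `sSup` returns the junk value `0`. -/
noncomputable def lcsDepth (m : M) : ℕ := sSup {k | m ∈ lowerCentralSeries R L M k}

variable {R L} [IsNilpotent L M]

lemma bddAbove_lowerCentralSeries_mem {m : M} (hm : m ≠ 0) :
    BddAbove {k | m ∈ lowerCentralSeries R L M k} := by
  obtain ⟨N, hN⟩ := IsNilpotent.nilpotent R L M
  refine ⟨N, fun k hk => ?_⟩
  by_contra hlt
  have := antitone_lowerCentralSeries R L M (le_of_not_ge hlt) hk
  rw [hN, LieSubmodule.mem_bot] at this
  exact hm this

lemma mem_lowerCentralSeries_lcsDepth (m : M) :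
    m ∈ lowerCentralSeries R L M (lcsDepth R L m) := by
  obtain rfl | hm := eq_or_ne m 0
  · exact zero_mem _
  · exact Nat.sSup_mem ⟨0, by simp⟩ (bddAbove_lowerCentralSeries_mem hm)

lemma lie_mem_lowerCentralSeries_lcsDepth_succ (x : L) (m : M) :
    ⁅x, m⁆ ∈ lowerCentralSeries R L M (lcsDepth R L m + 1) := by
  rw [lowerCentralSeries_succ]
  exact LieSubmodule.lie_mem_lie (LieSubmodule.mem_top x) (mem_lowerCentralSeries_lcsDepth m)

lemma lcsDepth_lt_of_mem {m m' : M} (hm' : m' ≠ 0)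
    (h : m' ∈ lowerCentralSeries R L M (lcsDepth R L m + 1)) : lcsDepth R L m < lcsDepth R L m' :=
  Nat.lt_of_succ_le (le_csSup (bddAbove_lowerCentralSeries_mem hm') h)

end Depth

lemma Arrow.lcsDepth_lt [LieRing.IsNilpotent g] {e : Module.Basis ι ℝ g} {i j k : ι}
    (h : Arrow e i j k) : lcsDepth ℝ g (e j) < lcsDepth ℝ g (e k) := by
  obtain ⟨c, hc, hb⟩ := h
  refine lcsDepth_lt_of_mem (e.ne_zero k) ?_
  have hk : e k = c⁻¹ • ⁅e i, e j⁆ := by rw [hb, smul_smul, inv_mul_cancel₀ hc, one_smul]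
  rw [hk]
  exact Submodule.smul_mem _ _ (lie_mem_lowerCentralSeries_lcsDepth_succ (e i) (e j))

/-- The data used to break the arrows labelled by `v`, `x` and `y` with the involution that swaps
`v` and `x` and fixes `y`: the triple may degenerate to `x = y` (a transposition) or to
`x = y = v` (the identity). -/
structure BreakingTriple (e : Module.Basis ι ℝ g) (v x y : ι) : Prop where
  isSource_v : IsSource e v
  isSource_x : IsSource e x
  isSource_y : IsSource e y
  not_isSource_of_arrow : ∀ a z, Arrow e a v z → ¬ IsSource e z
  lie_v_x : ⁅e v, e x⁆ = 0
  lie_v_y : ⁅e v, e y⁆ = 0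
  arrow_x : ∀ a z, Arrow e a x z → IsSource e z → z = v ∨ z = y
  arrow_y : ∀ a z, Arrow e a y z → IsSource e z → z = v
  eq_of_x_eq : x = v → y = v

namespace BreakingTriple

variable [DecidableEq ι] {e : Module.Basis ι ℝ g} {v x y : ι}

lemma swap_apply_mem {j : ι} (hj : j ∈ ({v, x, y} : Finset ι)) :
    Equiv.swap v x j ∈ ({v, x, y} : Finset ι) := by
  rw [Equiv.swap_apply_def]
  split_ifs <;> simp_all

lemma isSource_of_mem (ht : BreakingTriple e v x y) {j : ι}
    (hj : j ∈ ({v, x, y} : Finset ι)) : IsSource e j := by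
  simp only [mem_insert, mem_singleton] at hj
  obtain rfl | rfl | rfl := hj
  exacts [ht.isSource_v, ht.isSource_x, ht.isSource_y]

lemma lie_v_eq_zero (ht : BreakingTriple e v x y) {j : ι}
    (hj : j ∈ ({v, x, y} : Finset ι)) : ⁅e v, e j⁆ = 0 := by
  simp only [mem_insert, mem_singleton] at hj
  obtain rfl | rfl | rfl := hj
  exacts [lie_self _, ht.lie_v_x, ht.lie_v_y]

lemma lie_eq_zero_v (ht : BreakingTriple e v x y) {j : ι}
    (hj : j ∈ ({v, x, y} : Finset ι)) : ⁅e j, e v⁆ = 0 := by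
  rw [← lie_skew, ht.lie_v_eq_zero hj, neg_zero]

lemma mem_of_arrow (ht : BreakingTriple e v x y) {j a z : ι}
    (hj : j ∈ ({v, x, y} : Finset ι)) (h : Arrow e a j z) (hz : IsSource e z) :
    z ∈ ({v, x, y} : Finset ι) := by
  simp only [mem_insert, mem_singleton] at hj ⊢
  obtain rfl | rfl | rfl := hj
  · exact absurd hz (ht.not_isSource_of_arrow a z h)
  · have := ht.arrow_x a z h hz
    tauto
  · exact Or.inl (ht.arrow_y a z h hz)

lemma not_arrow_swap (ht : BreakingTriple e v x y) {j k a l : ι}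
    (hj : j ∈ ({v, x, y} : Finset ι)) (hk : k ∈ ({v, x, y} : Finset ι)) (h : Arrow e a j k) :
    ¬ Arrow e l (Equiv.swap v x j) (Equiv.swap v x k) := by
  intro h'
  simp only [mem_insert, mem_singleton] at hj
  obtain hjv | hjx | hjy := hj
  · exact ht.not_isSource_of_arrow a k (hjv ▸ h) (ht.isSource_of_mem hk)
  · rw [hjx, Equiv.swap_apply_right] at h'
    exact ht.not_isSource_of_arrow l _ h' (ht.isSource_of_mem (swap_apply_mem hk))
  rw [hjy] at h h'
  rw [ht.arrow_y a k h (ht.isSource_of_mem hk), Equiv.swap_apply_left] at h'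
  by_cases hyx : y = x
  · rw [hyx, Equiv.swap_apply_right] at h'
    exact ht.not_isSource_of_arrow l _ h' ht.isSource_x
  by_cases hyv : y = v
  · exact ht.not_isSource_of_arrow a k (by rwa [hyv] at h) (ht.isSource_of_mem hk)
  rw [Equiv.swap_apply_of_ne_of_ne hyv hyx] at h'
  exact hyv (ht.eq_of_x_eq (ht.arrow_y l x h' ht.isSource_x))

lemma lie_swap_eq_zero (ht : BreakingTriple e v x y) {i j : ι}
    (hi : i ∈ ({v, x, y} : Finset ι)) (hj : j ∈ ({v, x, y} : Finset ι))
    (hij : ⁅e i, e j⁆ ≠ 0) : ⁅e (Equiv.swap v x i), e (Equiv.swap v x j)⁆ = 0 := by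
  by_cases hix : i = x
  · rw [hix, Equiv.swap_apply_right]
    exact ht.lie_v_eq_zero (swap_apply_mem hj)
  by_cases hjx : j = x
  · rw [hjx, Equiv.swap_apply_right]
    exact ht.lie_eq_zero_v (swap_apply_mem hi)
  refine absurd ?_ hij
  obtain hiv | hiy : i = v ∨ i = y := by simpa [hix] using hi
  · exact hiv ▸ ht.lie_v_eq_zero hj
  obtain hjv | hjy : j = v ∨ j = y := by simpa [hjx] using hj
  · exact hjv ▸ ht.lie_eq_zero_v hi
  rw [hiy, hjy, lie_self]

lemma exists_isArrowBreaking [Fintype ι] (ht : BreakingTriple e v x y)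
    (hcard : #(sources e) = #(sources e)ᶜ + #{v, x, y}) :
    ∃ σ : Equiv.Perm ι, IsArrowBreaking e σ := by
  have hT : {v, x, y} ⊆ sources e := fun j hj => mem_sources.2 (ht.isSource_of_mem hj)
  refine exists_isArrowBreaking_of_block hT disjoint_compl_left
    (by rw [card_sdiff_of_subset hT]; omega) (Equiv.swap_apply_self v x) (fun z hz => ?_)
    (fun j hj a z h => ?_) (fun j hj k hk a l => ht.not_arrow_swap hj hk)
    (fun i hi j hj => ht.lie_swap_eq_zero hi hj)
  · simp only [mem_insert, mem_singleton, not_or] at hz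
    exact Equiv.swap_apply_of_ne_of_ne hz.1 hz.2.1
  · by_cases hz : IsSource e z
    · exact Or.inl (ht.mem_of_arrow hj h hz)
    · simp [hz]

end BreakingTriple

section TopSource

variable {e : Module.Basis ι ℝ g} {v : ι}

/-- Jacobi identity: `⁅e a, e v⁆` is a multiple of a central basis vector, so it commutes
with `e y`. -/
lemma IsNiceBasis.lie_eq_zero_of_arrow (hnice : IsNiceBasis e)
    (hv : ∀ a z, Arrow e a v z → ¬ IsSource e z) {a y z : ι} (hvy : ⁅e v, e y⁆ = 0)
    (h : Arrow e a y z) : ⁅e v, e z⁆ = 0 := by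
  obtain ⟨c, hc, hb⟩ := h
  have hav : ⁅⁅e a, e v⁆, e y⁆ = 0 := by
    by_cases h0 : ⁅e a, e v⁆ = 0
    · rw [h0, zero_lie]
    obtain ⟨k, hk⟩ := hnice.exists_arrow h0
    have hcentral := lie_eq_zero_of_not_isSource (hv a k hk) y
    obtain ⟨d, -, hd⟩ := hk
    rw [hd, smul_lie, hcentral, smul_zero]
  have : c • ⁅e v, e z⁆ = 0 := by
    calc c • ⁅e v, e z⁆ = ⁅e v, ⁅e a, e y⁆⁆ := by rw [hb, lie_smul]
      _ = ⁅⁅e v, e a⁆, e y⁆ + ⁅e a, ⁅e v, e y⁆⁆ := leibniz_lie _ _ _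
      _ = 0 := by rw [hvy, lie_zero, add_zero, ← lie_skew (e v) (e a), neg_lie, hav, neg_zero]
  exact (smul_eq_zero.1 this).resolve_left hc

open scoped Classical in
/-- The sources not commuting with `v` inject into the non-sources via `j ↦ k` for
`e v →^{e j} e k`, by niceness. -/
lemma IsNiceBasis.card_sources_le [Fintype ι] [DecidableEq ι] (hnice : IsNiceBasis e)
    (hv : ∀ a z, Arrow e a v z → ¬ IsSource e z) :
    #(sources e) ≤ #(sources e)ᶜ + #{j ∈ sources e | ⁅e v, e j⁆ = 0} := by
  suffices #{j ∈ sources e | ¬ ⁅e v, e j⁆ = 0} ≤ #(sources e)ᶜ by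
    rw [← card_filter_add_card_filter_not (fun j => ⁅e v, e j⁆ = 0)]
    omega
  have hhead : ∀ j ∈ {j ∈ sources e | ¬ ⁅e v, e j⁆ = 0}, ∃ k, Arrow e v j k :=
    fun j hj => hnice.exists_arrow (mem_filter.1 hj).2
  choose! f hf using hhead
  refine card_le_card_of_injOn f (fun j hj => ?_) (fun j hj j' hj' hjj' => ?_)
  · simpa using hv j (f j) (hf j hj).symm
  · exact (hf j hj).label_unique hnice (hjj' ▸ hf j' hj')

end TopSource

section Nilpotent

variable [Fintype ι] [DecidableEq ι] [LieRing.IsNilpotent g] {e : Module.Basis ι ℝ g} {v : ι}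

open scoped Classical in
/-- With `v` of maximal depth, take `y` the deepest source commuting with `v` and `x` the
next deepest: by the Jacobi identity, the source heads of their arrows are deeper sources
commuting with `v`, or `v` itself. -/
lemma IsNiceBasis.exists_breakingTriple (hnice : IsNiceBasis e) (hvS : IsSource e v)
    (hv : ∀ a z, Arrow e a v z → ¬ IsSource e z) {t : ℕ} (ht0 : 0 < t) (ht3 : t ≤ 3)
    (htD : t ≤ #{j ∈ sources e | ⁅e v, e j⁆ = 0}) :
    ∃ x y, BreakingTriple e v x y ∧ #{v, x, y} = t := by
  set D := {j ∈ sources e | ⁅e v, e j⁆ = 0}.erase v with hD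
  have hDcard : t ≤ #D + 1 := by
    rw [hD, card_erase_of_mem (by simp [hvS])]
    omega
  have hmemD : ∀ {y}, y ∈ D ↔ y ≠ v ∧ IsSource e y ∧ ⁅e v, e y⁆ = 0 := by simp [hD]
  have hhead : ∀ y ∈ D, ∀ a z, Arrow e a y z → IsSource e z → z ≠ v →
      z ∈ D ∧ lcsDepth ℝ g (e y) < lcsDepth ℝ g (e z) := fun y hy a z h hz hzv =>
    ⟨hmemD.2 ⟨hzv, hz, hnice.lie_eq_zero_of_arrow hv (hmemD.1 hy).2.2 h⟩, h.lcsDepth_lt⟩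
  obtain rfl | ht2 : t = 1 ∨ 2 ≤ t := by omega
  · refine ⟨v, v, ⟨hvS, hvS, hvS, hv, lie_self _, lie_self _, ?_, ?_, fun _ => rfl⟩, ?_⟩
    exacts [fun a z h hz => absurd hz (hv a z h), fun a z h hz => absurd hz (hv a z h), by simp]
  obtain ⟨y, hyD, hymax⟩ := exists_max_image D (fun i => lcsDepth ℝ g (e i))
    (card_pos.1 (by omega))
  obtain ⟨hyv, hyS, hvy⟩ := hmemD.1 hyD
  have hy : ∀ a z, Arrow e a y z → IsSource e z → z = v := fun a z h hz => by
    by_contra hzv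
    obtain ⟨hzD, hlt⟩ := hhead y hyD a z h hz hzv
    exact (hymax z hzD).not_gt hlt
  obtain rfl | rfl : t = 2 ∨ t = 3 := by omega
  · refine ⟨y, y, ⟨hvS, hyS, hyS, hv, hvy, hvy, fun a z h hz => .inl (hy a z h hz), hy, id⟩,
      by simp [hyv.symm]⟩
  obtain ⟨x, hxDy, hxmax⟩ := exists_max_image (D.erase y) (fun i => lcsDepth ℝ g (e i))
    (card_pos.1 (by rw [card_erase_of_mem hyD]; omega))
  obtain ⟨hxy, hxD⟩ := mem_erase.1 hxDy
  obtain ⟨hxv, hxS, hvx⟩ := hmemD.1 hxD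
  have hx : ∀ a z, Arrow e a x z → IsSource e z → z = v ∨ z = y := fun a z h hz => by
    by_contra! hzvy
    obtain ⟨hzD, hlt⟩ := hhead x hxD a z h hz hzvy.1
    exact (hxmax z (mem_erase.2 ⟨hzvy.2, hzD⟩)).not_gt hlt
  refine ⟨x, y, ⟨hvS, hxS, hyS, hv, hvx, hvy, hx, hy, fun h => absurd h hxv⟩, ?_⟩
  simp [hxv.symm, hyv.symm, hxy]

lemma IsNiceBasis.exists_isArrowBreaking (hnice : IsNiceBasis e)
    (h : #(sources e) ≤ #(sources e)ᶜ + 3) : ∃ σ : Equiv.Perm ι, IsArrowBreaking e σ := by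
  classical
  obtain hle | hlt := le_or_gt #(sources e) #(sources e)ᶜ
  · exact exists_isArrowBreaking_of_card_sources_le hle
  obtain ⟨v, hvS, hvmax⟩ := exists_max_image (sources e) (fun i => lcsDepth ℝ g (e i))
    (card_pos.1 (by omega))
  have hv : ∀ a z, Arrow e a v z → ¬ IsSource e z := fun a z h hz =>
    h.lcsDepth_lt.not_ge (hvmax z (mem_sources.2 hz))
  have hD := hnice.card_sources_le hv
  obtain ⟨x, y, ht, hcard⟩ := hnice.exists_breakingTriple (mem_sources.1 hvS) hv
    (t := #(sources e) - #(sources e)ᶜ) (by omega) (by omega) (by omega)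
  exact ht.exists_isArrowBreaking (by omega)

end Nilpotent

/-- A nice nilpotent Lie algebra with `r ≤ s + 3`, where `s` is the dimension
of the center and `r` the codimension of the center, has an arrow-breaking involution. -/
theorem statement6 {n : ℕ} {g : Type*} [LieRing g] [LieAlgebra ℝ g]
    [LieRing.IsNilpotent g]
    (e : Module.Basis (Fin n) ℝ g) (hnice : IsNiceBasis e)
    (hrs : n - Module.finrank ℝ ↥(LieAlgebra.center ℝ g) ≤
      Module.finrank ℝ ↥(LieAlgebra.center ℝ g) + 3) :
    ∃ σ : Equiv.Perm (Fin n), IsArrowBreaking (⇑e) σ := by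
  have hcenter := hnice.finrank_center_le
  have hcard : #(sources e) + #(sources e)ᶜ = n := by
    rw [card_add_card_compl, Fintype.card_fin]
  exact hnice.exists_isArrowBreaking (by omega)

end ArrowBreakingPaper
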